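/- Quantization error bound of Algorithm SSS-R (deterministic part): under the setting of the previous recursion with ‖ℓ_i‖₂² ≤ μ r / N for all i, the accumulated shaped error satisfies ‖Σ_{i=1}^M ℓ_i (f_i − q_i)‖₂² ≤ μ δ² r M / (4N). -/

import Mathlib

/-! With `a = ⟪ℓ, u⟫ / ‖ℓ‖²`, a step `u ↦ u + c • ℓ` changes `‖u‖²` by exactly
`‖ℓ‖² ((c + a)² - a²)`, and either the accuracy condition `|c + a| ≤ δ / 2` or the saturation
condition `|c + a| ≤ |a|` bounds the bracket by `δ² / 4`. Each of the `M` telescoping increments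
of `‖u_i‖²` is therefore at most `(μ r / N) δ² / 4`. -/

open Finset

theorem Fin.sum_univ_sub_succ {G : Type*} [AddCommGroup G] (s : ℕ → G) (n : ℕ) :
    ∑ i : Fin n, (s (i + 1) - s i) = s n - s 0 := by
  rw [Fin.sum_univ_eq_sum_range (fun i => s (i + 1) - s i), sum_range_sub]

section Step

variable {E : Type*} [NormedAddCommGroup E] [InnerProductSpace ℝ E]

-- For `ℓ = 0` the quotient is the junk value `0`, and both sides are `‖u‖ ^ 2`.
theorem norm_add_smul_sq_eq (u ℓ : E) (c : ℝ) :
    ‖u + c • ℓ‖ ^ 2 = ‖u‖ ^ 2 +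
      ‖ℓ‖ ^ 2 * ((c + inner ℝ ℓ u / ‖ℓ‖ ^ 2) ^ 2 - (inner ℝ ℓ u / ‖ℓ‖ ^ 2) ^ 2) := by
  rcases eq_or_ne ℓ 0 with rfl | hℓ
  · simp
  have hℓ2 : ‖ℓ‖ ^ 2 ≠ 0 := by positivity
  rw [norm_add_sq_real, real_inner_smul_right, real_inner_comm, norm_smul, Real.norm_eq_abs,
    mul_pow, sq_abs]
  field_simp
  ring

theorem sq_sub_sq_le_of_abs_le_or_abs_le {y a δ : ℝ} (h : |y| ≤ δ / 2 ∨ |y| ≤ |a|) :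
    y ^ 2 - a ^ 2 ≤ δ ^ 2 / 4 := by
  rcases h with h | h
  · nlinarith [sq_abs y, abs_nonneg y, sq_nonneg a]
  · nlinarith [sq_abs y, sq_abs a, abs_nonneg y, sq_nonneg δ]

theorem norm_add_smul_sq_le {u ℓ : E} {c δ : ℝ}
    (h : |c + inner ℝ ℓ u / ‖ℓ‖ ^ 2| ≤ δ / 2 ∨
      |c + inner ℝ ℓ u / ‖ℓ‖ ^ 2| ≤ |inner ℝ ℓ u / ‖ℓ‖ ^ 2|) :
    ‖u + c • ℓ‖ ^ 2 ≤ ‖u‖ ^ 2 + ‖ℓ‖ ^ 2 * (δ ^ 2 / 4) := by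
  rw [norm_add_smul_sq_eq]
  gcongr
  exact sq_sub_sq_le_of_abs_le_or_abs_le h

end Step

theorem stmt_12_general (r M N : ℕ) (μ δ : ℝ)
    (ℓ : Fin M → EuclideanSpace ℝ (Fin r)) (f q : Fin M → ℝ)
    (u : ℕ → EuclideanSpace ℝ (Fin r)) (hu0 : u 0 = 0)
    (hrec : ∀ i : Fin M, u (i + 1) = u i + (f i - q i) • ℓ i)
    (hbnd : ∀ i : Fin M, ‖ℓ i‖ ^ 2 ≤ μ * r / N)
    (hcase : ∀ i : Fin M,
      |f i + (inner ℝ (ℓ i) (u i) : ℝ) / ‖ℓ i‖ ^ 2 - q i| ≤ δ / 2 ∨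
      |f i + (inner ℝ (ℓ i) (u i) : ℝ) / ‖ℓ i‖ ^ 2 - q i| ≤
        |(inner ℝ (ℓ i) (u i) : ℝ) / ‖ℓ i‖ ^ 2|) :
    ‖∑ i : Fin M, (f i - q i) • ℓ i‖ ^ 2 ≤ μ * δ ^ 2 * r * M / (4 * N) := by
  have hsum : ∑ i : Fin M, (f i - q i) • ℓ i = u M := by
    rw [← sub_zero (u M), ← hu0, ← Fin.sum_univ_sub_succ]
    simp only [hrec, add_sub_cancel_left]
  have hstep (i : Fin M) : ‖u (i + 1)‖ ^ 2 - ‖u i‖ ^ 2 ≤ μ * δ ^ 2 * r / (4 * N) := by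
    have hi : ‖u (i + 1)‖ ^ 2 ≤ ‖u i‖ ^ 2 + ‖ℓ i‖ ^ 2 * (δ ^ 2 / 4) := by
      rw [hrec]
      refine norm_add_smul_sq_le ?_
      simpa only [add_sub_right_comm] using hcase i
    have hℓ : ‖ℓ i‖ ^ 2 * (δ ^ 2 / 4) ≤ μ * r / N * (δ ^ 2 / 4) := by
      gcongr
      exact hbnd i
    calc _ ≤ μ * r / N * (δ ^ 2 / 4) := by linarith
      _ = _ := by ring
  calc ‖∑ i : Fin M, (f i - q i) • ℓ i‖ ^ 2 = ‖u M‖ ^ 2 - ‖u 0‖ ^ 2 := by simp [hsum, hu0]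
    _ = ∑ i : Fin M, (‖u (i + 1)‖ ^ 2 - ‖u i‖ ^ 2) :=
      (Fin.sum_univ_sub_succ (fun n => ‖u n‖ ^ 2) M).symm
    _ ≤ ∑ _i : Fin M, μ * δ ^ 2 * r / (4 * N) := sum_le_sum fun i _ => hstep i
    _ = μ * δ ^ 2 * r * M / (4 * N) := by
      rw [sum_const, card_univ, Fintype.card_fin, nsmul_eq_mul]
      ring

/-- Deterministic quantization error bound of Algorithm SSS-R: under the
noise-shaping recursion with `‖ℓ_i‖₂² ≤ μ r / N`, the accumulated shaped
error satisfies `‖∑ ℓ_i (f_i − q_i)‖₂² ≤ μ δ² r M / (4N)`. -/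
theorem stmt_12 (r M N : ℕ) (hN : 0 < N) (μ δ : ℝ) (hμ : 0 < μ) (hδ : 0 < δ)
    (ℓ : Fin M → EuclideanSpace ℝ (Fin r)) (f q : Fin M → ℝ)
    (u : ℕ → EuclideanSpace ℝ (Fin r)) (hu0 : u 0 = 0)
    (hrec : ∀ i : Fin M, u (i + 1) = u i + (f i - q i) • ℓ i)
    (hne : ∀ i : Fin M, ℓ i ≠ 0)
    (hbnd : ∀ i : Fin M, ‖ℓ i‖ ^ 2 ≤ μ * r / N)
    (hcase : ∀ i : Fin M,
      |f i + (inner ℝ (ℓ i) (u i) : ℝ) / ‖ℓ i‖ ^ 2 - q i| ≤ δ / 2 ∨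
      |f i + (inner ℝ (ℓ i) (u i) : ℝ) / ‖ℓ i‖ ^ 2 - q i| ≤
        |(inner ℝ (ℓ i) (u i) : ℝ) / ‖ℓ i‖ ^ 2|) :
    ‖∑ i : Fin M, (f i - q i) • ℓ i‖ ^ 2 ≤ μ * δ ^ 2 * r * M / (4 * N) :=
  stmt_12_general r M N μ δ ℓ f q u hu0 hrec hbnd hcase
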